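/- Let G'=(V',E') be a directed graph without self-loops in which every node has in-degree 2 and out-degree 2, and such that for every ordered pair of distinct nodes u,v there exist two edge-disjoint directed paths from u to v. Suppose there exists a family (F_e)_{e ∈ E'} such that F_e is a frame for e for every e ∈ E', and for all e₁, e₂ ∈ E' one has e₂ ∈ F_{e₁} if and only if e₁ ∈ F_{e₂}. Then the constant vector x with x_e = 2/3 for all e ∈ E' lies in N(AT_bal(G')). -/

import Mathlib

open Finset

namespace TSPGap


/-! ### Lovász–Schrijver lift-and-project operators -/

/-- `cone(R) = {(λ, λx) : λ ≥ 0, x ∈ R}`, with the extra 0th coordinate first. -/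
def lsCone {ι : Type*} (R : Set (ι → ℝ)) : Set (ℝ × (ι → ℝ)) :=
  {p | ∃ c : ℝ, ∃ y ∈ R, 0 ≤ c ∧ p.1 = c ∧ p.2 = fun i => c * y i}

/-- `X` is a protection matrix witnessing `x ∈ N(R)`: it is symmetric, its 0th row and
diagonal both equal `(1, x)`, and each row `X_i` and difference `X_0 - X_i` lies in `cone(R)`. -/
def IsProtection {ι : Type*} (R : Set (ι → ℝ)) (x : ι → ℝ)
    (X : Option ι → Option ι → ℝ) : Prop :=
  (∀ i j, X i j = X j i) ∧
  X none none = 1 ∧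
  (∀ i, X none (some i) = x i) ∧
  (∀ i, X (some i) (some i) = x i) ∧
  (∀ i, (X (some i) none, fun j => X (some i) (some j)) ∈ lsCone R) ∧
  (∀ i, (X none none - X (some i) none,
         fun j => X none (some j) - X (some i) (some j)) ∈ lsCone R)

/-- The Lovász–Schrijver `N` operator. -/
def lsN {ι : Type*} (R : Set (ι → ℝ)) : Set (ι → ℝ) :=
  {x | ∃ X : Option ι → Option ι → ℝ, IsProtection R x X}

/-- The Lovász–Schrijver `N₊` operator (protection matrix additionally PSD). -/
def lsNplus {ι : Type*} [Fintype ι] (R : Set (ι → ℝ)) : Set (ι → ℝ) :=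
  {x | ∃ X : Matrix (Option ι) (Option ι) ℝ, X.PosSemidef ∧
        IsProtection R x (fun i j => X i j)}

/-! ### Directed graphs -/

variable {V : Type*} [DecidableEq V]

/-- The list of (directed) steps of a walk given by its list of vertices. -/
def dSteps (l : List V) : List (V × V) := l.zip l.tail

/-- The steps of a closed walk given by its list of vertices. -/
def cycSteps (l : List V) : List (V × V) := l.zip (l.rotate 1)

/-- `l` is a directed walk from `u` to `v` using edges of `E`. -/
def IsDWalk (E : Finset (V × V)) (u v : V) (l : List V) : Prop :=
  l.head? = some u ∧ l.getLast? = some v ∧ ∀ a ∈ dSteps l, a ∈ E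

/-- Total weight of a walk. -/
def dWalkWeight (w : V × V → ℝ) (l : List V) : ℝ := ((dSteps l).map w).sum

/-- Shortest-path distance from `u` to `v` in the weighted directed graph `(E, w)`. -/
noncomputable def dDist (E : Finset (V × V)) (w : V × V → ℝ) (u v : V) : ℝ :=
  sInf {c | ∃ l : List V, IsDWalk E u v l ∧ dWalkWeight w l = c}

/-- `x(δ⁺(S))`. -/
def outCut (E : Finset (V × V)) (x : ↥E → ℝ) (S : Finset V) : ℝ :=
  ∑ e ∈ E.attach.filter (fun e => e.val.1 ∈ S ∧ e.val.2 ∉ S), x e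

/-- `x(δ⁻(S))`. -/
def inCut (E : Finset (V × V)) (x : ↥E → ℝ) (S : Finset V) : ℝ :=
  ∑ e ∈ E.attach.filter (fun e => e.val.1 ∉ S ∧ e.val.2 ∈ S), x e

/-- `d · x = ∑_e d_e x_e` over the edge set `E`. -/
def dDot (E : Finset (V × V)) (d : V × V → ℝ) (x : ↥E → ℝ) : ℝ :=
  ∑ e ∈ E.attach, d e.val * x e

/-- The balanced asymmetric tour polytope of the directed graph with node set `VS`
and edge set `E`. -/
def ATbal (VS : Finset V) (E : Finset (V × V)) : Set (↥E → ℝ) :=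
  {x | (∀ e, 0 ≤ x e ∧ x e ≤ 1) ∧
       (∀ S : Finset V, S ⊆ VS → S.Nonempty → S ≠ VS →
          1 ≤ outCut E x S ∧ 1 ≤ inCut E x S) ∧
       (∀ v ∈ VS, outCut E x {v} = inCut E x {v})}

/-- Indicator vectors of Hamiltonian cycles (on node set `VS`) among edges `E`. -/
def hamCycleVecs (VS : Finset V) (E : Finset (V × V)) : Set (↥E → ℝ) :=
  {x | ∃ c : List V, 2 ≤ c.length ∧ c.Nodup ∧ c.toFinset = VS ∧
        (∀ a ∈ cycSteps c, a ∈ E) ∧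
        ∀ e : ↥E, x e = if e.val ∈ cycSteps c then 1 else 0}

/-- Edge set of the complete directed graph on the node set `VS` (no self-loops). -/
def dComplete (VS : Finset V) : Finset (V × V) := (VS ×ˢ VS).filter (fun e => e.1 ≠ e.2)

/-- Edge set of the complete directed graph on all of `V` (no self-loops). -/
def dCompleteAll (V : Type*) [Fintype V] [DecidableEq V] : Finset (V × V) :=
  Finset.univ.filter (fun e => e.1 ≠ e.2)

/-- Out-degree of `v` in edge set `E`. -/
def outDeg (E : Finset (V × V)) (v : V) : ℕ := (E.filter (fun e => e.1 = v)).card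

/-- In-degree of `v` in edge set `E`. -/
def inDeg (E : Finset (V × V)) (v : V) : ℕ := (E.filter (fun e => e.2 = v)).card

/-- A frame for the edge `e = (u,v)`: a set `F ⊆ E \ {e}` consisting of an edge-simple
path from `u` to `v` together with zero or more edge-simple cycles, all pairwise
edge-disjoint. -/
def IsFrame (E : Finset (V × V)) (e : V × V) (F : Finset (V × V)) : Prop :=
  F ⊆ E.erase e ∧
  ∃ (p : List V) (cs : List (List V)),
    p.head? = some e.1 ∧ p.getLast? = some e.2 ∧ (∀ a ∈ dSteps p, a ∈ E) ∧
    (∀ c ∈ cs, c ≠ [] ∧ ∀ a ∈ cycSteps c, a ∈ E) ∧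
    (dSteps p ++ (cs.map cycSteps).flatten).Nodup ∧
    F = (dSteps p ++ (cs.map cycSteps).flatten).toFinset

/-- There exist two edge-disjoint directed (simple) paths from `u` to `v` in `E`. -/
def TwoEdgeDisjointPaths (E : Finset (V × V)) (u v : V) : Prop :=
  ∃ p q : List V, p.Nodup ∧ q.Nodup ∧
    p.head? = some u ∧ p.getLast? = some v ∧
    q.head? = some u ∧ q.getLast? = some v ∧
    (∀ a ∈ dSteps p, a ∈ E) ∧ (∀ a ∈ dSteps q, a ∈ E) ∧
    (dSteps p).Disjoint (dSteps q)




/-! ### The Charikar–Goemans–Karloff graphs -/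

/-- Vertex type housing the graph `G_{k,r}` (index `k = 0` is a dummy level). -/
def CGKV : ℕ → Type
  | 0 => PUnit
  | 1 => ℕ
  | k + 2 => (ℕ × CGKV (k + 1)) ⊕ Fin 2

instance CGKV.decEq : (k : ℕ) → DecidableEq (CGKV k)
  | 0 => inferInstanceAs (DecidableEq PUnit)
  | 1 => inferInstanceAs (DecidableEq ℕ)
  | k + 2 =>
      letI : DecidableEq (CGKV (k + 1)) := CGKV.decEq (k + 1)
      inferInstanceAs (DecidableEq ((ℕ × CGKV (k + 1)) ⊕ Fin 2))

/-- The source of `G_{k,r}`. -/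
def CGKsrc (r : ℕ) : (k : ℕ) → CGKV k
  | 0 => PUnit.unit
  | 1 => (0 : ℕ)
  | _ + 2 => Sum.inr 0

/-- The sink of `G_{k,r}`. -/
def CGKsnk (r : ℕ) : (k : ℕ) → CGKV k
  | 0 => PUnit.unit
  | 1 => (r + 1 : ℕ)
  | _ + 2 => Sum.inr 1

/-- The node set of `G_{k,r}`. -/
def CGKVS (r : ℕ) : (k : ℕ) → Finset (CGKV k)
  | 0 => ∅
  | 1 => Finset.range (r + 2)
  | k + 2 =>
      ((Finset.range r) ×ˢ CGKVS r (k + 1)).image Sum.inl ∪ {Sum.inr 0, Sum.inr 1}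

/-- The edge set of `G_{k,r}`: at level 1, two oppositely-directed paths of `r+1` edges
on the nodes `0, …, r+1`; at level `k+2`, the edges of the `r` copies of `G_{k+1,r}`
together with a path from the source `s` through the copies' sources to the sink `t`,
and a path from `t` through the copies' sinks (in the opposite order) back to `s`. -/
def CGKE (r : ℕ) : (k : ℕ) → Finset (CGKV k × CGKV k)
  | 0 => ∅
  | 1 => (dSteps (List.range (r + 2))).toFinset ∪
         (dSteps (List.range (r + 2)).reverse).toFinset
  | k + 2 =>
      (Finset.range r).biUnion
        (fun j => (CGKE r (k + 1)).image (fun e => (Sum.inl (j, e.1), Sum.inl (j, e.2)))) ∪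
      (dSteps (Sum.inr 0 ::
        ((List.range r).map (fun j => Sum.inl (j, CGKsrc r (k + 1)))) ++ [Sum.inr 1])).toFinset ∪
      (dSteps (Sum.inr 1 ::
        (((List.range r).map (fun j => Sum.inl (j, CGKsnk r (k + 1)))).reverse) ++ [Sum.inr 0])).toFinset

/-- Edge weights of `G_{k,r}` (and of `L_{k,r}`): level-`ℓ` edges have weight `r^(ℓ-1)`. -/
def CGKw (r : ℕ) : (k : ℕ) → CGKV k × CGKV k → ℝ
  | 0, _ => 0
  | 1, _ => 1
  | k + 2, e =>
      match e with
      | (Sum.inl (j, u), Sum.inl (j', v)) =>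
          if j = j' then CGKw r (k + 1) (u, v) else (r : ℝ) ^ (k + 1)
      | _ => (r : ℝ) ^ (k + 1)

/-- `v₁`: the successor of `s` on the forward path of `G_{k,r}`. -/
def Lv1 (r : ℕ) : (k : ℕ) → CGKV k
  | 0 => PUnit.unit
  | 1 => (1 : ℕ)
  | k + 2 => Sum.inl (0, CGKsrc r (k + 1))

/-- `v₂`: the predecessor of `t` on the forward path of `G_{k,r}`. -/
def Lv2 (r : ℕ) : (k : ℕ) → CGKV k
  | 0 => PUnit.unit
  | 1 => (r : ℕ)
  | k + 2 => Sum.inl (r - 1, CGKsrc r (k + 1))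

/-- `v₃`: the successor of `t` on the backward path of `G_{k,r}`. -/
def Lv3 (r : ℕ) : (k : ℕ) → CGKV k
  | 0 => PUnit.unit
  | 1 => (r : ℕ)
  | k + 2 => Sum.inl (r - 1, CGKsnk r (k + 1))

/-- `v₄`: the predecessor of `s` on the backward path of `G_{k,r}`. -/
def Lv4 (r : ℕ) : (k : ℕ) → CGKV k
  | 0 => PUnit.unit
  | 1 => (1 : ℕ)
  | k + 2 => Sum.inl (0, CGKsnk r (k + 1))

/-- The node set `V_{k,r}` of `L_{k,r}`: the nodes of `G_{k,r}` minus the two terminals. -/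
def LVS (r k : ℕ) : Finset (CGKV k) :=
  ((CGKVS r k).erase (CGKsrc r k)).erase (CGKsnk r k)

/-- The edge set `E_{k,r}` of `L_{k,r}`: the edges of `G_{k,r}` not incident to a terminal,
plus the two new edges `(v₂,v₁)` and `(v₄,v₃)`. -/
def LE (r k : ℕ) : Finset (CGKV k × CGKV k) :=
  (CGKE r k).filter (fun e =>
    e.1 ≠ CGKsrc r k ∧ e.1 ≠ CGKsnk r k ∧ e.2 ≠ CGKsrc r k ∧ e.2 ≠ CGKsnk r k) ∪
  {(Lv2 r k, Lv1 r k), (Lv4 r k, Lv3 r k)}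



/-! ### Undirected graphs -/

variable {V : Type*} [DecidableEq V]

/-- The (undirected) steps of a walk given by its list of vertices. -/
def uSteps (l : List V) : List (Sym2 V) := (l.zip l.tail).map (fun p => Sym2.mk p.1 p.2)

/-- `l` is a walk from `u` to `v` in the undirected edge set `E`. -/
def IsUWalk (E : Finset (Sym2 V)) (u v : V) (l : List V) : Prop :=
  l.head? = some u ∧ l.getLast? = some v ∧ ∀ e ∈ uSteps l, e ∈ E

/-- Whether the undirected edge `e` crosses the cut `(S, S̄)`. -/
def uCrosses (S : Finset V) (e : Sym2 V) : Bool :=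
  Sym2.lift ⟨fun a b => xor (decide (a ∈ S)) (decide (b ∈ S)),
    fun a b => Bool.xor_comm _ _⟩ e

/-- `x(δ(S))`. -/
def uCut (E : Finset (Sym2 V)) (x : ↥E → ℝ) (S : Finset V) : ℝ :=
  ∑ e ∈ E.attach.filter (fun e => uCrosses S e.val), x e

/-- `d · x = ∑_e d_e x_e` over the undirected edge set `E`. -/
def uDot (E : Finset (Sym2 V)) (d : Sym2 V → ℝ) (x : ↥E → ℝ) : ℝ :=
  ∑ e ∈ E.attach, d e.val * x e

/-- The symmetric tour polytope of the undirected graph with node set `VS`, edges `E`. -/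
def STpoly (VS : Finset V) (E : Finset (Sym2 V)) : Set (↥E → ℝ) :=
  {x | (∀ e, 0 ≤ x e ∧ x e ≤ 1) ∧
       (∀ S : Finset V, S ⊆ VS → S.Nonempty → S ≠ VS → 2 ≤ uCut E x S) ∧
       (∀ v ∈ VS, uCut E x {v} = 2)}

/-- The symmetric path polytope of the undirected graph with node set `VS`, edges `E`,
and endpoints `s`, `t`. -/
def SPpoly (VS : Finset V) (E : Finset (Sym2 V)) (s t : V) : Set (↥E → ℝ) :=
  {x | (∀ e, 0 ≤ x e ∧ x e ≤ 1) ∧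
       (∀ S : Finset V, S ⊆ VS → S.Nonempty → S ≠ VS →
          (((s ∈ S) ↔ (t ∈ S)) → 2 ≤ uCut E x S) ∧
          (¬((s ∈ S) ↔ (t ∈ S)) → 1 ≤ uCut E x S)) ∧
       (∀ v ∈ VS, v ≠ s → v ≠ t → uCut E x {v} = 2) ∧
       uCut E x {s} = 1 ∧ uCut E x {t} = 1}

/-- Indicator vectors of Hamiltonian paths from `s` to `t` (on node set `VS`) among
edges `E`. -/
def uHamPathVecs (VS : Finset V) (E : Finset (Sym2 V)) (s t : V) : Set (↥E → ℝ) :=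
  {x | ∃ p : List V, p.Nodup ∧ p.toFinset = VS ∧
        p.head? = some s ∧ p.getLast? = some t ∧
        (∀ e ∈ uSteps p, e ∈ E) ∧
        ∀ e : ↥E, x e = if e.val ∈ uSteps p then 1 else 0}

/-- Edge set of the complete undirected graph on all of `V` (no self-loops). -/
def uCompleteAll (V : Type*) [Fintype V] [DecidableEq V] : Finset (Sym2 V) :=
  Finset.univ.filter (fun e => ¬ e.IsDiag)

/-- Shortest-path distance (number of edges) between the endpoints of `e`, in the
unweighted undirected graph with edge set `E`. -/
noncomputable def uDist (E : Finset (Sym2 V)) (e : Sym2 V) : ℝ :=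
  sInf {c | ∃ u v : V, e = s(u, v) ∧
    ∃ l : List V, IsUWalk E u v l ∧ ((uSteps l).length : ℝ) = c}

/-! ### Cheung's graphs -/

/-- The node set `V_{ℓ,q}` of Cheung's graph `G_{ℓ,q}`: a top path and a bottom path of
`ℓ+1` nodes each, a left and a right clique of `3q+3` nodes each, and nodes `s`, `t`. -/
inductive ChV (l q : ℕ) where
  | top : Fin (l + 1) → ChV l q
  | bot : Fin (l + 1) → ChV l q
  | left : Fin (3 * q + 3) → ChV l q
  | right : Fin (3 * q + 3) → ChV l q
  | vs : ChV l q
  | vt : ChV l q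
deriving DecidableEq, Fintype

/-- The edges of the two paths of `G_{ℓ,q}`. -/
def ChEpaths (l q : ℕ) : Finset (Sym2 (ChV l q)) :=
  (Finset.univ : Finset (Fin l)).image
    (fun i => s(ChV.top i.castSucc, ChV.top i.succ)) ∪
  (Finset.univ : Finset (Fin l)).image
    (fun i => s(ChV.bot i.castSucc, ChV.bot i.succ))

/-- The edges within the two cliques of `G_{ℓ,q}`. -/
def ChEcliques (l q : ℕ) : Finset (Sym2 (ChV l q)) :=
  ((Finset.univ : Finset (Fin (3 * q + 3) × Fin (3 * q + 3))).filter
      (fun p => p.1 ≠ p.2)).image (fun p => s(ChV.left p.1, ChV.left p.2)) ∪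
  ((Finset.univ : Finset (Fin (3 * q + 3) × Fin (3 * q + 3))).filter
      (fun p => p.1 ≠ p.2)).image (fun p => s(ChV.right p.1, ChV.right p.2))

/-- The connection edges of `G_{ℓ,q}`: path endpoints to the cliques, `s` to the left
clique, and `t` to the right clique. -/
def ChEconn (l q : ℕ) : Finset (Sym2 (ChV l q)) :=
  (Finset.univ : Finset (Fin (3 * q + 3))).image (fun i => s(ChV.top 0, ChV.left i)) ∪
  (Finset.univ : Finset (Fin (3 * q + 3))).image (fun i => s(ChV.bot 0, ChV.left i)) ∪
  (Finset.univ : Finset (Fin (3 * q + 3))).image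
    (fun i => s(ChV.top (Fin.last l), ChV.right i)) ∪
  (Finset.univ : Finset (Fin (3 * q + 3))).image
    (fun i => s(ChV.bot (Fin.last l), ChV.right i)) ∪
  (Finset.univ : Finset (Fin (3 * q + 3))).image (fun i => s(ChV.vs, ChV.left i)) ∪
  (Finset.univ : Finset (Fin (3 * q + 3))).image (fun i => s(ChV.vt, ChV.right i))

/-- The edge set `E_{ℓ,q}` of Cheung's graph `G_{ℓ,q}`. -/
def ChE (l q : ℕ) : Finset (Sym2 (ChV l q)) :=
  ChEpaths l q ∪ ChEcliques l q ∪ ChEconn l q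

/-- The node set of `G'_{ℓ,q}`: `G_{ℓ,q}` plus `ℓ-1` new internal path nodes. -/
inductive ChV' (l q : ℕ) where
  | old : ChV l q → ChV' l q
  | mid : Fin (l - 1) → ChV' l q
deriving DecidableEq, Fintype

/-- The new `s`–`t` path of `G'_{ℓ,q}` (as a list of nodes; it has `ℓ` edges). -/
def ChPathList (l q : ℕ) : List (ChV' l q) :=
  ChV'.old ChV.vs :: ((List.finRange (l - 1)).map ChV'.mid ++ [ChV'.old ChV.vt])

/-- The edge set `E'_{ℓ,q}` of `G'_{ℓ,q}`: the (old) edges of `G_{ℓ,q}` together with the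
`ℓ` new edges of a path from `s` to `t` through `ℓ-1` new nodes. -/
def ChE' (l q : ℕ) : Finset (Sym2 (ChV' l q)) :=
  (ChE l q).image (Sym2.map ChV'.old) ∪ (uSteps (ChPathList l q)).toFinset

/-! The protection matrix has rows `X_e = (2/3) z^e`, where `z^e` is `1` on `e`, `1/2` on the
frame `F_e` and `3/4` elsewhere; then `X_0 - X_e = (1/3) w^e`, where `w^e` is `0` on `e`,
`1` on `F_e` and `1/2` elsewhere. The symmetry `e₂ ∈ F_{e₁} ↔ e₁ ∈ F_{e₂}` makes `X`
symmetric. Both `z^e` and `w^e` are balanced: the path of `F_e` runs parallel to `e`, so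
`χ(F_e) - χ(e)` has zero net flow at every node, and in- and out-degrees agree. Every cut is
crossed by two edges in each direction (two edge-disjoint paths), each of value `≥ 1/2`; for
`w^e`, a cut crossed by `e` is also crossed by the path of `F_e`, on which `w^e = 1`. -/

lemma mem_lsN_of_rows {ι : Type*} {R : Set (ι → ℝ)} {x : ι → ℝ} (Y : ι → ι → ℝ)
    (hsymm : ∀ i j, Y i j = Y j i) (hdiag : ∀ i, Y i i = x i)
    (hrow : ∀ i, (x i, Y i) ∈ lsCone R) (hcompl : ∀ i, (1 - x i, x - Y i) ∈ lsCone R) :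
    x ∈ lsN R :=
  ⟨fun i j => i.elim (j.elim 1 x) fun i => j.elim (x i) (Y i), by
    rintro (_ | i) (_ | j) <;> simp [hsymm], rfl, fun _ => rfl, hdiag, hrow, hcompl⟩

section Frames

lemma dSteps_cons_cons {α : Type*} (a b : α) (t : List α) :
    dSteps (a :: b :: t) = (a, b) :: dSteps (b :: t) := rfl

lemma exists_mem_dSteps_crossing {α : Type*} {P : α → Prop} :
    ∀ (l : List α) {a b : α}, l.head? = some a → l.getLast? = some b → P a → ¬ P b →
      ∃ s ∈ dSteps l, P s.1 ∧ ¬ P s.2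
  | [], _, _, ha, _, _, _ => by simp at ha
  | [x], _, _, ha, hb, hPa, hPb => by
      obtain rfl : x = _ := by simpa using ha
      obtain rfl : x = _ := by simpa using hb
      exact absurd hPa hPb
  | x :: y :: t, _, _, ha, hb, hPa, hPb => by
      obtain rfl : x = _ := by simpa using ha
      rw [dSteps_cons_cons]
      by_cases hy : P y
      · obtain ⟨s, hs, hcross⟩ := exists_mem_dSteps_crossing (y :: t) rfl
          (by rwa [← List.getLast?_cons_cons]) hy hPb
        exact ⟨s, List.mem_cons_of_mem _ hs, hcross⟩
      · exact ⟨(x, y), List.mem_cons_self, hPa, hy⟩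

lemma countP_fst_dSteps_add (v : V) :
    ∀ l : List V,
      (dSteps l).countP (·.1 = v) + (if l.getLast? = some v then 1 else 0)
        = (dSteps l).countP (·.2 = v) + (if l.head? = some v then 1 else 0)
  | [] => by simp [dSteps]
  | [x] => by simp [dSteps]
  | x :: y :: t => by
      have ih := countP_fst_dSteps_add v (y :: t)
      rw [dSteps_cons_cons, List.countP_cons, List.countP_cons, List.getLast?_cons_cons]
      simp only [List.head?_cons, Option.some.injEq] at ih ⊢
      by_cases hx : x = v <;> by_cases hy : y = v <;> simp [hx, hy] at ih ⊢ <;> omega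

lemma countP_fst_cycSteps (v : V) (c : List V) :
    (cycSteps c).countP (·.1 = v) = (cycSteps c).countP (·.2 = v) := by
  have hfst : (cycSteps c).map Prod.fst = c := List.map_fst_zip (by simp)
  have hsnd : (cycSteps c).map Prod.snd = c.rotate 1 := List.map_snd_zip (by simp)
  calc (cycSteps c).countP (·.1 = v) = ((cycSteps c).map Prod.fst).countP (· = v) := by
        rw [List.countP_map]; rfl
    _ = (c.rotate 1).countP (· = v) := by rw [hfst, (List.rotate_perm c 1).countP_eq]
    _ = (cycSteps c).countP (·.2 = v) := by rw [← hsnd, List.countP_map]; rfl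

lemma IsFrame.card_filter_fst_add {E F : Finset (V × V)} {e : V × V} (hF : IsFrame E e F)
    (v : V) :
    #{f ∈ F | f.1 = v} + (if e.2 = v then 1 else 0)
      = #{f ∈ F | f.2 = v} + (if e.1 = v then 1 else 0) := by
  obtain ⟨-, p, cs, hp₁, hp₂, -, -, hnd, rfl⟩ := hF
  have hcard (q : V × V → Prop) [DecidablePred q] :
      #{f ∈ (dSteps p ++ (cs.map cycSteps).flatten).toFinset | q f}
        = (dSteps p ++ (cs.map cycSteps).flatten).countP (q ·) := by
    rw [Finset.card_def, Finset.filter_val, List.toFinset_val, List.dedup_eq_self.mpr hnd,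
      Multiset.filter_coe, Multiset.coe_card, List.countP_eq_length_filter]
  have hcycles : (cs.map cycSteps).flatten.countP (·.1 = v)
      = (cs.map cycSteps).flatten.countP (·.2 = v) := by
    simp only [List.countP_flatten, List.map_map]
    exact congrArg List.sum (List.map_congr_left fun c _ => countP_fst_cycSteps v c)
  have hpath := countP_fst_dSteps_add v p
  rw [hp₁, hp₂] at hpath
  simp only [Option.some.injEq] at hpath
  rw [hcard, hcard, List.countP_append, List.countP_append, hcycles]
  omega

end Frames

section Cuts

lemma outCut_val (E : Finset (V × V)) (g : V × V → ℝ) (S : Finset V) :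
    outCut E (fun f => g f) S = ∑ f ∈ E with f.1 ∈ S ∧ f.2 ∉ S, g f := by
  rw [outCut, Finset.sum_filter,
    Finset.sum_attach E fun f => if f.1 ∈ S ∧ f.2 ∉ S then g f else 0, ← Finset.sum_filter]

lemma inCut_val (E : Finset (V × V)) (g : V × V → ℝ) (S : Finset V) :
    inCut E (fun f => g f) S = ∑ f ∈ E with f.1 ∉ S ∧ f.2 ∈ S, g f := by
  rw [inCut, Finset.sum_filter,
    Finset.sum_attach E fun f => if f.1 ∉ S ∧ f.2 ∈ S then g f else 0, ← Finset.sum_filter]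

lemma inCut_eq_outCut_compl [Fintype V] (E : Finset (V × V)) (x : ↥E → ℝ) (S : Finset V) :
    inCut E x S = outCut E x Sᶜ := by
  simp only [inCut, outCut, Finset.mem_compl, not_not]

/-- Loops at `v` lie in neither cut, so only the full out- and in-sums need to agree. -/
lemma outCut_singleton_eq_inCut_singleton (E : Finset (V × V)) (g : V × V → ℝ) (v : V)
    (h : ∑ f ∈ E with f.1 = v, g f = ∑ f ∈ E with f.2 = v, g f) :
    outCut E (fun f => g f) {v} = inCut E (fun f => g f) {v} := by
  have hout : ∑ f ∈ E with f.1 = v, g f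
      = outCut E (fun f => g f) {v} + ∑ f ∈ E with f.1 = v ∧ f.2 = v, g f := by
    rw [← Finset.sum_filter_add_sum_filter_not {f ∈ E | f.1 = v} (fun f => f.2 = v),
      Finset.filter_filter, Finset.filter_filter, add_comm, outCut_val]
    simp only [Finset.mem_singleton]
  have hin : ∑ f ∈ E with f.2 = v, g f
      = inCut E (fun f => g f) {v} + ∑ f ∈ E with f.1 = v ∧ f.2 = v, g f := by
    rw [← Finset.sum_filter_add_sum_filter_not {f ∈ E | f.2 = v} (fun f => f.1 = v),
      Finset.filter_filter, Finset.filter_filter, add_comm, inCut_val]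
    simp only [Finset.mem_singleton, and_comm]
  linarith

lemma one_lt_card_filter_leaving (E : Finset (V × V))
    (hpaths : ∀ u v : V, u ≠ v → TwoEdgeDisjointPaths E u v)
    {S : Finset V} {a b : V} (ha : a ∈ S) (hb : b ∉ S) :
    1 < #{f ∈ E | f.1 ∈ S ∧ f.2 ∉ S} := by
  obtain ⟨p, q, -, -, hp₁, hp₂, hq₁, hq₂, hpE, hqE, hdisj⟩ :=
    hpaths a b (ne_of_mem_of_not_mem ha hb)
  obtain ⟨f₁, hf₁, hcross₁⟩ :=
    exists_mem_dSteps_crossing (P := (· ∈ S)) p hp₁ hp₂ ha hb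
  obtain ⟨f₂, hf₂, hcross₂⟩ :=
    exists_mem_dSteps_crossing (P := (· ∈ S)) q hq₁ hq₂ ha hb
  exact Finset.one_lt_card.mpr ⟨f₁, Finset.mem_filter.mpr ⟨hpE _ hf₁, hcross₁⟩,
    f₂, Finset.mem_filter.mpr ⟨hqE _ hf₂, hcross₂⟩, fun h => hdisj hf₁ (h ▸ hf₂)⟩

lemma one_le_sum_leaving_of_half_le (E : Finset (V × V))
    (hpaths : ∀ u v : V, u ≠ v → TwoEdgeDisjointPaths E u v)
    {S : Finset V} {a b : V} (ha : a ∈ S) (hb : b ∉ S) {g : V × V → ℝ}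
    (hg : ∀ f ∈ E, f.1 ∈ S → f.2 ∉ S → 1 / 2 ≤ g f) :
    1 ≤ ∑ f ∈ E with f.1 ∈ S ∧ f.2 ∉ S, g f := by
  have hcard : (2 : ℝ) ≤ #{f ∈ E | f.1 ∈ S ∧ f.2 ∉ S} := by
    exact_mod_cast one_lt_card_filter_leaving E hpaths ha hb
  have hsum := Finset.card_nsmul_le_sum {f ∈ E | f.1 ∈ S ∧ f.2 ∉ S} g (1 / 2) fun f hf => by
    obtain ⟨hfE, h₁, h₂⟩ := Finset.mem_filter.mp hf
    exact hg f hfE h₁ h₂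
  rw [nsmul_eq_mul] at hsum
  linarith

lemma IsFrame.one_le_sum_leaving {E F : Finset (V × V)} {e : V × V} (hF : IsFrame E e F)
    (hpaths : ∀ u v : V, u ≠ v → TwoEdgeDisjointPaths E u v)
    {S : Finset V} {a b : V} (ha : a ∈ S) (hb : b ∉ S) {g : V × V → ℝ}
    (hg₀ : ∀ f ∈ E, 0 ≤ g f) (hg : ∀ f ∈ E, f ≠ e → 1 / 2 ≤ g f)
    (hgF : ∀ f ∈ F, 1 ≤ g f) :
    1 ≤ ∑ f ∈ E with f.1 ∈ S ∧ f.2 ∉ S, g f := by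
  by_cases he : e.1 ∈ S ∧ e.2 ∉ S
  · obtain ⟨hFE, p, cs, hp₁, hp₂, hpE, -, -, rfl⟩ := hF
    obtain ⟨f, hf, hcross⟩ :=
      exists_mem_dSteps_crossing (P := (· ∈ S)) p hp₁ hp₂ he.1 he.2
    have hfF : f ∈ (dSteps p ++ (cs.map cycSteps).flatten).toFinset := by simp [hf]
    exact (hgF f hfF).trans <|
      Finset.single_le_sum (fun f hf => hg₀ f (Finset.mem_filter.mp hf).1)
        (Finset.mem_filter.mpr ⟨hpE f hf, hcross⟩)
  · exact one_le_sum_leaving_of_half_le E hpaths ha hb fun f hfE h₁ h₂ =>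
      hg f hfE fun hfe => he (hfe ▸ ⟨h₁, h₂⟩)

lemma mem_ATbal_univ [Fintype V] {E : Finset (V × V)} {g : V × V → ℝ}
    (hg : ∀ f ∈ E, 0 ≤ g f ∧ g f ≤ 1)
    (hcut : ∀ (S : Finset V) (a b : V), a ∈ S → b ∉ S →
      1 ≤ ∑ f ∈ E with f.1 ∈ S ∧ f.2 ∉ S, g f)
    (hbal : ∀ v, ∑ f ∈ E with f.1 = v, g f = ∑ f ∈ E with f.2 = v, g f) :
    (fun f : ↥E => g f) ∈ ATbal Finset.univ E := by
  refine ⟨fun f => hg f f.2, fun S _ ⟨a, ha⟩ hS => ?_,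
    fun v _ => outCut_singleton_eq_inCut_singleton E g v (hbal v)⟩
  obtain ⟨b, hb⟩ := not_forall.mp (mt Finset.eq_univ_iff_forall.mpr hS)
  rw [inCut_eq_outCut_compl, outCut_val, outCut_val]
  exact ⟨hcut S a b ha hb, hcut Sᶜ b a (Finset.mem_compl.mpr hb) (by simpa using ha)⟩

end Cuts

section FrameSignal

def frameSignal (e : V × V) (F : Finset (V × V)) (f : V × V) : ℝ :=
  (if f = e then 1 else 0) - (if f ∈ F then 1 else 0)

lemma IsFrame.notMem {E F : Finset (V × V)} {e : V × V} (hF : IsFrame E e F) : e ∉ F :=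
  fun he => Finset.notMem_erase e E (hF.1 he)

lemma frameSignal_self {e : V × V} {F : Finset (V × V)} (he : e ∉ F) :
    frameSignal e F e = 1 := by
  simp [frameSignal, he]

lemma frameSignal_comm {E : Finset (V × V)} {Fam : ↥E → Finset (V × V)}
    (hSymm : ∀ e₁ e₂ : ↥E, e₂.val ∈ Fam e₁ ↔ e₁.val ∈ Fam e₂)
    (e₁ e₂ : ↥E) : frameSignal e₁ (Fam e₁) e₂ = frameSignal e₂ (Fam e₂) e₁ := by
  simp only [frameSignal, hSymm e₁ e₂, eq_comm (a := e₂.val)]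

lemma sum_filter_frameSignal {E F : Finset (V × V)} {e : V × V} (he : e ∈ E) (hFE : F ⊆ E)
    (p : V × V → Prop) [DecidablePred p] :
    ∑ f ∈ E with p f, frameSignal e F f = (if p e then 1 else 0) - #{f ∈ F | p f} := by
  simp only [frameSignal]
  rw [Finset.sum_sub_distrib, Finset.sum_ite_eq', Finset.sum_boole, Finset.filter_filter]
  congr 3
  · simp [he]
  · ext f
    simp only [Finset.mem_filter]
    exact ⟨fun h => ⟨h.2.2, h.2.1⟩, fun h => ⟨hFE h.1, h.2, h.1⟩⟩

lemma IsFrame.sum_frameSignal_out_eq_in {E F : Finset (V × V)} {e : V × V} (hF : IsFrame E e F)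
    (he : e ∈ E) (v : V) :
    ∑ f ∈ E with f.1 = v, frameSignal e F f = ∑ f ∈ E with f.2 = v, frameSignal e F f := by
  have hFE : F ⊆ E := hF.1.trans (Finset.erase_subset e E)
  have hcard := congrArg (Nat.cast : ℕ → ℝ) (hF.card_filter_fst_add v)
  rw [sum_filter_frameSignal he hFE, sum_filter_frameSignal he hFE]
  push_cast at hcard
  linarith

lemma IsFrame.sum_affine_frameSignal_out_eq_in {E F : Finset (V × V)} {e : V × V}
    (hF : IsFrame E e F) (he : e ∈ E) (hdeg : ∀ v, outDeg E v = inDeg E v) (a b : ℝ) (v : V) :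
    ∑ f ∈ E with f.1 = v, (a + b * frameSignal e F f)
      = ∑ f ∈ E with f.2 = v, (a + b * frameSignal e F f) := by
  have hdeg' : (#{f ∈ E | f.1 = v} : ℝ) = #{f ∈ E | f.2 = v} := by exact_mod_cast hdeg v
  simp only [Finset.sum_add_distrib, Finset.sum_const, nsmul_eq_mul, ← Finset.mul_sum,
    hF.sum_frameSignal_out_eq_in he v, hdeg']

end FrameSignal

section Protection

variable [Fintype V] {E F : Finset (V × V)} {e : V × V}

lemma IsFrame.mem_ATbal_row (hF : IsFrame E e F) (he : e ∈ E)
    (hdeg : ∀ v, outDeg E v = inDeg E v)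
    (hpaths : ∀ u v : V, u ≠ v → TwoEdgeDisjointPaths E u v) :
    (fun f : ↥E => 3 / 4 + 1 / 4 * frameSignal e F f) ∈ ATbal Finset.univ E := by
  refine mem_ATbal_univ (fun f _ => ?_) (fun S a b ha hb => ?_)
    (hF.sum_affine_frameSignal_out_eq_in he hdeg _ _)
  · simp only [frameSignal]
    constructor <;> split_ifs <;> norm_num
  · refine one_le_sum_leaving_of_half_le E hpaths ha hb fun f _ _ _ => ?_
    simp only [frameSignal]
    split_ifs <;> norm_num

lemma IsFrame.mem_ATbal_compl (hF : IsFrame E e F) (he : e ∈ E)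
    (hdeg : ∀ v, outDeg E v = inDeg E v)
    (hpaths : ∀ u v : V, u ≠ v → TwoEdgeDisjointPaths E u v) :
    (fun f : ↥E => 1 / 2 + -(1 / 2) * frameSignal e F f) ∈ ATbal Finset.univ E := by
  refine mem_ATbal_univ (fun f _ => ?_) (fun S a b ha hb => ?_)
    (hF.sum_affine_frameSignal_out_eq_in he hdeg _ _)
  · simp only [frameSignal]
    constructor <;> split_ifs <;> norm_num
  · refine hF.one_le_sum_leaving hpaths ha hb (fun f _ => ?_) (fun f _ hfe => ?_) (fun f hf => ?_)
    · simp only [frameSignal]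
      split_ifs <;> norm_num
    · simp only [frameSignal, if_neg hfe]
      split_ifs <;> norm_num
    · simp only [frameSignal, if_pos hf, if_neg (ne_of_mem_of_not_mem hf hF.notMem)]
      norm_num

end Protection

theorem stmt5_general {V : Type*} [Fintype V] [DecidableEq V] (E : Finset (V × V))
    (hdeg : ∀ v : V, outDeg E v = 2 ∧ inDeg E v = 2)
    (hpaths : ∀ u v : V, u ≠ v → TwoEdgeDisjointPaths E u v)
    (Fam : ↥E → Finset (V × V))
    (hFrame : ∀ e : ↥E, IsFrame E e.val (Fam e))
    (hSymm : ∀ e₁ e₂ : ↥E, e₂.val ∈ Fam e₁ ↔ e₁.val ∈ Fam e₂) :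
    (fun _ : ↥E => (2 / 3 : ℝ)) ∈ lsN (ATbal Finset.univ E) := by
  have hbal : ∀ v, outDeg E v = inDeg E v := fun v => (hdeg v).1.trans (hdeg v).2.symm
  refine mem_lsN_of_rows (fun e f => 2 / 3 * (3 / 4 + 1 / 4 * frameSignal e (Fam e) f))
    (fun e f => by rw [frameSignal_comm hSymm]) (fun e => ?_) (fun e => ?_) (fun e => ?_)
  · rw [frameSignal_self (hFrame e).notMem]
    norm_num
  · exact ⟨2 / 3, _, (hFrame e).mem_ATbal_row e.2 hbal hpaths, by norm_num, rfl, rfl⟩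
  · refine ⟨1 / 3, _, (hFrame e).mem_ATbal_compl e.2 hbal hpaths, by norm_num, by norm_num, ?_⟩
    funext f
    simp only [Pi.sub_apply]
    ring

theorem stmt5 {V : Type*} [Fintype V] [DecidableEq V] (E : Finset (V × V))
    (hloop : ∀ e ∈ E, e.1 ≠ e.2)
    (hdeg : ∀ v : V, outDeg E v = 2 ∧ inDeg E v = 2)
    (hpaths : ∀ u v : V, u ≠ v → TwoEdgeDisjointPaths E u v)
    (Fam : ↥E → Finset (V × V))
    (hFrame : ∀ e : ↥E, IsFrame E e.val (Fam e))
    (hSymm : ∀ e₁ e₂ : ↥E, e₂.val ∈ Fam e₁ ↔ e₁.val ∈ Fam e₂) :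
    (fun _ : ↥E => (2 / 3 : ℝ)) ∈ lsN (ATbal Finset.univ E) :=
  stmt5_general E hdeg hpaths Fam hFrame hSymm

end TSPGap
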